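/- Suppose a group G acts geometrically (properly, cocompactly, by isometries) on a proper CAT(0) space X, and let g ∈ G. Then the fixed-point set 𝓕_g = {α ∈ ∂X : gα = α} of g in the boundary equals the limit set L(Z_g) of the centralizer Z_g = {v ∈ G : gv = vg}. -/

import Mathlib

/-- A geodesic ray: an isometric embedding of `[0,∞)`. -/
def GeodesicRay {X : Type*} [MetricSpace X] (ξ : ℝ → X) : Prop :=
  ∀ s t : ℝ, 0 ≤ s → 0 ≤ t → dist (ξ s) (ξ t) = |s - t|

/-- Two geodesic rays are asymptotic if they stay at bounded distance. -/
def Asymptotic {X : Type*} [MetricSpace X] (ξ ζ : ℝ → X) : Prop :=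
  ∃ N : ℝ, ∀ t : ℝ, 0 ≤ t → dist (ξ t) (ζ t) ≤ N

/-- `γ` restricted to `[a,b]` is a geodesic. -/
def IsGeodesicOn {X : Type*} [MetricSpace X] (γ : ℝ → X) (a b : ℝ) : Prop :=
  ∀ s ∈ Set.Icc a b, ∀ t ∈ Set.Icc a b, dist (γ s) (γ t) = |s - t|

/-- A geodesic metric space: any two points are joined by a geodesic. -/
def GeodesicSpace (X : Type*) [MetricSpace X] : Prop :=
  ∀ x y : X, ∃ γ : ℝ → X, γ 0 = x ∧ γ (dist x y) = y ∧ IsGeodesicOn γ 0 (dist x y)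

/-- A CAT(0) space: a geodesic space satisfying the CN (Bruhat–Tits) inequality,
which is equivalent to the CAT(0) comparison-triangle inequality. -/
def CAT0 (X : Type*) [MetricSpace X] : Prop :=
  GeodesicSpace X ∧
  ∀ x y z m : X, dist y m = dist y z / 2 → dist z m = dist y z / 2 →
    dist x m ^ 2 ≤ (dist x y ^ 2 + dist x z ^ 2) / 2 - dist y z ^ 2 / 4

/-- The translation length of an isometry. -/
noncomputable def translationLength {X : Type*} [MetricSpace X] (g : X ≃ᵢ X) : ℝ :=
  ⨅ x : X, dist x (g x)

/-- The minimal set of an isometry. -/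
noncomputable def minSet {X : Type*} [MetricSpace X] (g : X ≃ᵢ X) : Set X :=
  {x | dist x (g x) = translationLength g}

/-- A hyperbolic isometry: nonempty minimal set and positive translation length. -/
def IsHyperbolic {X : Type*} [MetricSpace X] (g : X ≃ᵢ X) : Prop :=
  (minSet g).Nonempty ∧ 0 < translationLength g

/-- The set of geodesic rays in `X`. -/
def Ray (X : Type*) [MetricSpace X] := {ξ : ℝ → X // GeodesicRay ξ}

/-- Asymptoticity is an equivalence relation on geodesic rays. -/
def raySetoid (X : Type*) [MetricSpace X] : Setoid (Ray X) where
  r ξ ζ := Asymptotic ξ.1 ζ.1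
  iseqv := by
    refine ⟨fun ξ => ⟨0, fun t _ => by simp⟩, fun {ξ ζ} h => ?_, fun {a b c} h h' => ?_⟩
    · obtain ⟨N, hN⟩ := h
      exact ⟨N, fun t ht => by rw [dist_comm]; exact hN t ht⟩
    · obtain ⟨N, hN⟩ := h; obtain ⟨M, hM⟩ := h'
      exact ⟨N + M, fun t ht =>
        (dist_triangle _ (b.1 t) _).trans (add_le_add (hN t ht) (hM t ht))⟩

/-- The (visual) boundary of `X`: asymptotic classes of geodesic rays. -/
def Boundary (X : Type*) [MetricSpace X] := Quotient (raySetoid X)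

/-- The image of a geodesic ray under an isometry. -/
def rayMap {X : Type*} [MetricSpace X] (g : X ≃ᵢ X) (ξ : Ray X) : Ray X :=
  ⟨fun t => g (ξ.1 t), fun s t hs ht => by
    rw [IsometryEquiv.dist_eq]; exact ξ.2 s t hs ht⟩

/-- The induced map of an isometry on the boundary. -/
def boundaryMap {X : Type*} [MetricSpace X] (g : X ≃ᵢ X) : Boundary X → Boundary X :=
  @Quotient.map _ _ (raySetoid X) (raySetoid X) (rayMap g)
    (fun ξ ζ h => by
      obtain ⟨N, hN⟩ := h
      exact ⟨N, fun t ht => by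
        simpa [rayMap, IsometryEquiv.dist_eq] using hN t ht⟩)

/-- The boundary of a subset `A ⊆ X`: classes of geodesic rays with image in `A`. -/
def subBoundary {X : Type*} [MetricSpace X] (A : Set X) : Set (Boundary X) :=
  {α | ∃ ξ : Ray X, (∀ t : ℝ, 0 ≤ t → ξ.1 t ∈ A) ∧ Quotient.mk (raySetoid X) ξ = α}

section GroupAction

variable {G : Type*} {X : Type*} [Group G] [MetricSpace X] [MulAction G X] [IsIsometricSMul G X]

/-- The image of a geodesic ray under the action of a group element. -/
def smulRay (g : G) (ξ : Ray X) : Ray X :=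
  ⟨fun t => g • ξ.1 t, fun s t hs ht => by rw [dist_smul]; exact ξ.2 s t hs ht⟩

/-- The induced action of a group element on the boundary. -/
def boundarySMul (g : G) : Boundary X → Boundary X :=
  @Quotient.map _ _ (raySetoid X) (raySetoid X) (smulRay g)
    (fun ξ ζ h => by
      obtain ⟨N, hN⟩ := h
      exact ⟨N, fun t ht => by simpa [smulRay, dist_smul] using hN t ht⟩)

/-- Convergence of a sequence of points of `X` to the boundary point of the ray `ξ`
issuing from `x₀`, in the cone topology: eventually the points leave every ball around
`x₀` and the geodesics from `x₀` to them fellow-travel `ξ`. -/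
def ConvergesTo (x₀ : X) (x : ℕ → X) (ξ : Ray X) : Prop :=
  ∀ r > (0:ℝ), ∀ ε > (0:ℝ), ∃ n₀ : ℕ, ∀ n ≥ n₀,
    r < dist x₀ (x n) ∧
    ∀ γ : ℝ → X, IsGeodesicOn γ 0 (dist x₀ (x n)) → γ 0 = x₀ → γ (dist x₀ (x n)) = x n →
      dist (ξ.1 r) (γ r) < ε

/-- The limit set of a subset `A ⊆ G`: boundary points which are limits of orbit
sequences `vᵢ • x₀` with `vᵢ ∈ A`. -/
def LimitSet (A : Set G) (x₀ : X) : Set (Boundary X) :=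
  {α | ∃ ξ : Ray X, ξ.1 0 = x₀ ∧ Quotient.mk (raySetoid X) ξ = α ∧
    ∃ v : ℕ → G, (∀ i, v i ∈ A) ∧ ConvergesTo x₀ (fun i => v i • x₀) ξ}

/-- A (metrically) proper action: orbit balls contain only finitely many orbit points. -/
def ProperAction (G : Type*) (X : Type*) [Group G] [MetricSpace X] [MulAction G X] : Prop :=
  ∀ x₀ : X, ∀ r : ℝ, {h : G | dist x₀ (h • x₀) ≤ r}.Finite

/-- A cocompact action: some orbit is coarsely dense. -/
def CocompactAction (G : Type*) (X : Type*) [Group G] [MetricSpace X] [MulAction G X] : Prop :=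
  ∀ x₀ : X, ∃ N > (0:ℝ), ∀ x : X, ∃ v : G, dist (v • x₀) x ≤ N

/-- The centralizer of `g` in `G`. -/
def Zg {G : Type*} [Group G] (g : G) : Set G := {v : G | g * v = v * g}

end GroupAction

/-!
If `g` fixes the class of a ray `ξ` issuing from `x₀`, then `g` moves all points of `ξ` by a
bounded amount. By cocompactness each `ξ k` is near some `w • x₀`; the conjugate `w⁻¹ g w` then
moves `x₀` a bounded amount, so by properness only finitely many conjugates occur. Correcting `w`
by a fixed conjugator for each of them gives elements of the centralizer whose orbit points stay
near `ξ k`, hence converge to `ξ`.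

Conversely, if `vᵢ` centralizes `g` then `g` moves `vᵢ • x₀` exactly as far as `x₀`. By convexity of
the CAT(0) metric, `g` moves every point of the geodesic `[x₀, vᵢ • x₀]` by at most that distance,
and these geodesics fellow-travel `ξ`, so `g • ξ` stays at bounded distance from `ξ`.
-/

open Set Filter Topology

theorem nonpos_of_midpoint_convex_dyadic {g : ℝ → ℝ}
    (hmid : ∀ s ∈ Icc (0 : ℝ) 1, ∀ u ∈ Icc (0 : ℝ) 1, g ((s + u) / 2) ≤ (g s + g u) / 2)
    (h0 : g 0 ≤ 0) (h1 : g 1 ≤ 0) (k j : ℕ) (hj : j ≤ 2 ^ k) : g (j / 2 ^ k) ≤ 0 := by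
  induction k generalizing j with
  | zero => interval_cases j <;> simpa
  | succ k ih =>
    have hmem : ∀ i : ℕ, i ≤ 2 ^ k → (i : ℝ) / 2 ^ k ∈ Icc (0 : ℝ) 1 := fun i hi =>
      ⟨by positivity, div_le_one_of_le₀ (by exact_mod_cast hi) (by positivity)⟩
    rw [pow_succ] at hj
    obtain ⟨i, rfl | rfl⟩ := Nat.even_or_odd' j
    · have hi : ((2 * i : ℕ) : ℝ) / 2 ^ (k + 1) = i / 2 ^ k := by
        push_cast; field_simp; ring
      rw [hi]
      exact ih i (by omega)
    · have hi : ((2 * i + 1 : ℕ) : ℝ) / 2 ^ (k + 1) = (i / 2 ^ k + (i + 1 : ℕ) / 2 ^ k) / 2 := by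
        push_cast; field_simp; ring
      rw [hi]
      linarith [hmid _ (hmem i (by omega)) _ (hmem (i + 1) (by omega)),
        ih i (by omega), ih (i + 1) (by omega)]

theorem le_chord_of_midpoint_convex {f : ℝ → ℝ} (hf : ContinuousOn f (Icc 0 1))
    (hmid : ∀ s ∈ Icc (0 : ℝ) 1, ∀ u ∈ Icc (0 : ℝ) 1, f ((s + u) / 2) ≤ (f s + f u) / 2)
    {t : ℝ} (ht : t ∈ Icc (0 : ℝ) 1) : f t ≤ (1 - t) * f 0 + t * f 1 := by
  set g : ℝ → ℝ := fun s => f s - ((1 - s) * f 0 + s * f 1)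
  have hg_mid : ∀ s ∈ Icc (0 : ℝ) 1, ∀ u ∈ Icc (0 : ℝ) 1, g ((s + u) / 2) ≤ (g s + g u) / 2 := by
    intro s hs u hu
    simp only [g]
    linarith [hmid s hs u hu]
  have hg : ContinuousOn g (Icc 0 1) := hf.sub (by fun_prop)
  set s : ℕ → ℝ := fun k => ⌊t * 2 ^ k⌋₊ / 2 ^ k
  have hs_le : ∀ k, ⌊t * 2 ^ k⌋₊ ≤ 2 ^ k := fun k =>
    Nat.floor_le_of_le (by exact_mod_cast mul_le_of_le_one_left (by positivity) ht.2)
  have hs_mem : ∀ k, s k ∈ Icc (0 : ℝ) 1 := fun k =>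
    ⟨by positivity, div_le_one_of_le₀ (by exact_mod_cast hs_le k) (by positivity)⟩
  have hs_lim : Tendsto s atTop (𝓝 t) :=
    (tendsto_nat_floor_mul_div_atTop ht.1).comp (tendsto_pow_atTop_atTop_of_one_lt one_lt_two)
  have hgs_lim : Tendsto (fun k => g (s k)) atTop (𝓝 (g t)) :=
    (hg t ht).tendsto.comp (tendsto_nhdsWithin_iff.2 ⟨hs_lim, .of_forall hs_mem⟩)
  have hgt : g t ≤ 0 := le_of_tendsto' hgs_lim fun k =>
    nonpos_of_midpoint_convex_dyadic hg_mid (by simp [g]) (by simp [g]) k _ (hs_le k)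
  linarith

section

variable {X : Type*} [MetricSpace X]

def IsMidpoint (p q m : X) : Prop := dist p m = dist p q / 2 ∧ dist q m = dist p q / 2

theorem IsMidpoint.symm {p q m : X} (h : IsMidpoint p q m) : IsMidpoint q p m := by
  rw [IsMidpoint, dist_comm q p]
  exact And.symm h

namespace IsGeodesicOn

variable {γ : ℝ → X} {a b : ℝ}

theorem mono (h : IsGeodesicOn γ a b) {a' b' : ℝ} (ha : a ≤ a') (hb : b' ≤ b) :
    IsGeodesicOn γ a' b' :=
  fun s hs t ht => h s ⟨ha.trans hs.1, hs.2.trans hb⟩ t ⟨ha.trans ht.1, ht.2.trans hb⟩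

theorem dist_eq_sub (h : IsGeodesicOn γ a b) (hab : a ≤ b) : dist (γ a) (γ b) = b - a := by
  rw [h a (left_mem_Icc.2 hab) b (right_mem_Icc.2 hab), abs_sub_comm, abs_of_nonneg (by linarith)]

theorem continuousOn (h : IsGeodesicOn γ a b) : ContinuousOn γ (Icc a b) :=
  (LipschitzOnWith.of_dist_le_mul (K := 1) fun s hs t ht => by
    simp [h s hs t ht, Real.dist_eq]).continuousOn

theorem isMidpoint (h : IsGeodesicOn γ a b) {s t : ℝ} (hs : s ∈ Icc a b) (ht : t ∈ Icc a b) :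
    IsMidpoint (γ s) (γ t) (γ ((s + t) / 2)) := by
  have hm : (s + t) / 2 ∈ Icc a b := ⟨by linarith [hs.1, ht.1], by linarith [hs.2, ht.2]⟩
  rw [IsMidpoint, h s hs _ hm, h t ht _ hm, h s hs t ht,
    show s - (s + t) / 2 = (s - t) / 2 by ring, show t - (s + t) / 2 = -((s - t) / 2) by ring,
    abs_neg, abs_div, abs_two]
  exact ⟨rfl, rfl⟩

theorem smul {G : Type*} [Group G] [MulAction G X] [IsIsometricSMul G X]
    (h : IsGeodesicOn γ a b) (g : G) : IsGeodesicOn (fun s => g • γ s) a b :=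
  fun s hs t ht => by rw [dist_smul]; exact h s hs t ht

end IsGeodesicOn

namespace GeodesicRay

variable {ξ : ℝ → X}

theorem isGeodesicOn (h : GeodesicRay ξ) (T : ℝ) : IsGeodesicOn ξ 0 T :=
  fun s hs t ht => h s t hs.1 ht.1

theorem abs_dist_sub_le (h : GeodesicRay ξ) (x : X) {t : ℝ} (ht : 0 ≤ t) :
    |dist x (ξ t) - t| ≤ dist x (ξ 0) := by
  simpa [(h.isGeodesicOn t).dist_eq_sub ht] using _root_.abs_dist_sub_le x (ξ 0) (ξ t)

theorem of_tendsto {ι : Type*} {l : Filter ι} [l.NeBot] {σ : ι → ℝ → X}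
    (hlim : ∀ t, 0 ≤ t → Tendsto (fun i => σ i t) l (𝓝 (ξ t)))
    (hgeo : ∀ s t, 0 ≤ s → 0 ≤ t → ∀ᶠ i in l, dist (σ i s) (σ i t) = |s - t|) :
    GeodesicRay ξ := fun s t hs ht =>
  tendsto_nhds_unique ((hlim s hs).dist (hlim t ht))
    (tendsto_const_nhds.congr' ((hgeo s t hs ht).mono fun _ h => h.symm))

end GeodesicRay

theorem GeodesicSpace.exists_isMidpoint (hG : GeodesicSpace X) (p q : X) :
    ∃ m, IsMidpoint p q m := by
  obtain ⟨γ, h0, h1, hγ⟩ := hG p q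
  have hm := hγ.isMidpoint (left_mem_Icc.2 dist_nonneg) (right_mem_Icc.2 dist_nonneg)
  rw [h0, h1] at hm
  exact ⟨_, hm⟩

namespace CAT0

theorem dist_isMidpoint_le_half (hX : CAT0 X) {p q q' m m' : X} (hm : IsMidpoint p q m)
    (hm' : IsMidpoint p q' m') : dist m m' ≤ dist q q' / 2 := by
  have h1 := hX.2 m' p q m hm.1 hm.2
  have h2 := hX.2 q p q' m' hm'.1 hm'.2
  rw [dist_comm m' m, dist_comm m' p, hm'.1, dist_comm m' q] at h1
  rw [dist_comm q p] at h2
  exact le_of_pow_le_pow_left₀ two_ne_zero (by positivity) (by linarith)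

theorem dist_isMidpoint_le (hX : CAT0 X) {p q p' q' m m' : X} (hm : IsMidpoint p q m)
    (hm' : IsMidpoint p' q' m') : dist m m' ≤ (dist p p' + dist q q') / 2 := by
  obtain ⟨n, hn⟩ := hX.1.exists_isMidpoint p q'
  linarith [dist_triangle m n m', hX.dist_isMidpoint_le_half hm hn,
    hX.dist_isMidpoint_le_half hn.symm hm'.symm]

theorem dist_geodesics_le (hX : CAT0 X) {γ δ : ℝ → X} {a b : ℝ} (ha : 0 ≤ a) (hb : 0 ≤ b)
    (hγ : IsGeodesicOn γ 0 a) (hδ : IsGeodesicOn δ 0 b) {t : ℝ} (ht : t ∈ Icc (0 : ℝ) 1) :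
    dist (γ (t * a)) (δ (t * b)) ≤ (1 - t) * dist (γ 0) (δ 0) + t * dist (γ a) (δ b) := by
  have hmem : ∀ {c : ℝ}, 0 ≤ c → MapsTo (· * c) (Icc 0 1) (Icc 0 c) :=
    fun hc s hs => ⟨mul_nonneg hs.1 hc, mul_le_of_le_one_left hc hs.2⟩
  have hcont : ContinuousOn (fun s => dist (γ (s * a)) (δ (s * b))) (Icc 0 1) :=
    continuous_dist.comp_continuousOn <| (hγ.continuousOn.comp (by fun_prop) (hmem ha)).prodMk
      (hδ.continuousOn.comp (by fun_prop) (hmem hb))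
  have hmid : ∀ s ∈ Icc (0 : ℝ) 1, ∀ u ∈ Icc (0 : ℝ) 1,
      dist (γ ((s + u) / 2 * a)) (δ ((s + u) / 2 * b)) ≤
        (dist (γ (s * a)) (δ (s * b)) + dist (γ (u * a)) (δ (u * b))) / 2 := by
    intro s hs u hu
    have hγm := hγ.isMidpoint (hmem ha hs) (hmem ha hu)
    have hδm := hδ.isMidpoint (hmem hb hs) (hmem hb hu)
    rw [← add_mul, mul_div_right_comm] at hγm hδm
    exact hX.dist_isMidpoint_le hγm hδm
  simpa using le_chord_of_midpoint_convex hcont hmid ht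

theorem dist_geodesics_le_of_endpoints (hX : CAT0 X) {γ δ : ℝ → X} {a C : ℝ} (ha : 0 < a)
    (hγ : IsGeodesicOn γ 0 a) (hδ : IsGeodesicOn δ 0 a) (h0 : dist (γ 0) (δ 0) ≤ C)
    (ha' : dist (γ a) (δ a) ≤ C) {r : ℝ} (hr : r ∈ Icc 0 a) : dist (γ r) (δ r) ≤ C := by
  have ht : r / a ∈ Icc (0 : ℝ) 1 := ⟨div_nonneg hr.1 ha.le, div_le_one_of_le₀ hr.2 ha.le⟩
  have hconv := hX.dist_geodesics_le ha.le ha.le hγ hδ ht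
  rw [div_mul_cancel₀ r ha.ne'] at hconv
  calc dist (γ r) (δ r) ≤ (1 - r / a) * C + r / a * C :=
        hconv.trans (add_le_add (mul_le_mul_of_nonneg_left h0 (sub_nonneg.2 ht.2))
          (mul_le_mul_of_nonneg_left ha' ht.1))
    _ = C := by ring

theorem dist_geodesics_le_of_same_start (hX : CAT0 X) {γ δ : ℝ → X} {a b B r : ℝ} (ha : 0 < a)
    (hb : 0 ≤ b) (hγ : IsGeodesicOn γ 0 a) (hδ : IsGeodesicOn δ 0 b) (h0 : γ 0 = δ 0)
    (hB : dist (γ a) (δ b) ≤ B) (hr : 0 ≤ r) (hra : r ≤ a) (hrb : r ≤ b) :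
    dist (γ r) (δ r) ≤ 2 * B * r / a := by
  set t := r / a
  have ht : t ∈ Icc (0 : ℝ) 1 := ⟨div_nonneg hr ha.le, div_le_one_of_le₀ hra ha.le⟩
  have hta : t * a = r := div_mul_cancel₀ r ha.ne'
  have hconv := hX.dist_geodesics_le ha.le hb hγ hδ ht
  rw [h0, dist_self, mul_zero, zero_add, hta] at hconv
  have hlen : |b - a| ≤ B := by
    have h := _root_.abs_dist_sub_le (δ b) (γ a) (δ 0)
    rw [dist_comm (δ b) (δ 0), hδ.dist_eq_sub hb, ← h0, dist_comm (γ a) (γ 0),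
      hγ.dist_eq_sub ha.le, dist_comm (δ b)] at h
    simpa using h.trans hB
  have hshift : dist (δ (t * b)) (δ r) ≤ t * B := by
    rw [hδ _ ⟨mul_nonneg ht.1 hb, mul_le_of_le_one_left hb ht.2⟩ r ⟨hr, hrb⟩, ← hta, ← mul_sub,
      abs_mul, abs_of_nonneg ht.1]
    exact mul_le_mul_of_nonneg_left hlen ht.1
  calc dist (γ r) (δ r) ≤ dist (γ r) (δ (t * b)) + dist (δ (t * b)) (δ r) := dist_triangle _ _ _
    _ ≤ t * B + t * B := add_le_add (hconv.trans (mul_le_mul_of_nonneg_left hB ht.1)) hshift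
    _ = 2 * B * r / a := by ring

section RayFrom

variable {x : X} {ζ : ℝ → X}

theorem dist_geodesic_ray_proportional_le (hX : CAT0 X) (hζ : GeodesicRay ζ) {σ : ℝ → X} {L m : ℝ}
    (hL : 0 ≤ L) (hm : 0 ≤ m) (hσ : IsGeodesicOn σ 0 L) (hσL : σ L = ζ m) {s : ℝ}
    (hs : s ∈ Icc (0 : ℝ) 1) : dist (σ (s * L)) (ζ (s * m)) ≤ dist (σ 0) (ζ 0) := by
  have hconv := hX.dist_geodesics_le hL hm hσ (hζ.isGeodesicOn m) hs
  rw [hσL, dist_self, mul_zero, add_zero] at hconv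
  exact hconv.trans (mul_le_of_le_one_left dist_nonneg (sub_le_self _ hs.1))

theorem dist_geodesic_to_ray_le (hX : CAT0 X) (hζ : GeodesicRay ζ) {σ : ℝ → X} {m : ℝ}
    (hm : 0 < m) (hσ : IsGeodesicOn σ 0 (dist x (ζ m))) (hσ0 : σ 0 = x)
    (hσm : σ (dist x (ζ m)) = ζ m) {t : ℝ} (ht : 0 ≤ t) (htm : t ≤ m)
    (htL : t ≤ dist x (ζ m)) : dist (σ t) (ζ t) ≤ 2 * dist x (ζ 0) := by
  set L := dist x (ζ m)
  set s := t / m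
  have hs : s ∈ Icc (0 : ℝ) 1 := ⟨div_nonneg ht hm.le, div_le_one_of_le₀ htm hm.le⟩
  have hsm : s * m = t := div_mul_cancel₀ t hm.ne'
  have hnear := hX.dist_geodesic_ray_proportional_le hζ dist_nonneg hm.le hσ hσm hs
  rw [hsm, hσ0] at hnear
  have hshift : dist (σ t) (σ (s * L)) ≤ dist x (ζ 0) := by
    rw [hσ t ⟨ht, htL⟩ _ ⟨mul_nonneg hs.1 dist_nonneg, mul_le_of_le_one_left dist_nonneg hs.2⟩,
      ← hsm, ← mul_sub, abs_mul, abs_of_nonneg hs.1, abs_sub_comm]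
    exact (mul_le_of_le_one_left (abs_nonneg _) hs.2).trans (hζ.abs_dist_sub_le x hm.le)
  linarith [dist_triangle (σ t) (σ (s * L)) (ζ t)]

theorem dist_geodesics_to_ray_le (hX : CAT0 X) (hζ : GeodesicRay ζ) {σ τ : ℝ → X} {n m : ℝ}
    (hnm : n ≤ m) (hσ : IsGeodesicOn σ 0 (dist x (ζ n))) (hσ0 : σ 0 = x)
    (hσn : σ (dist x (ζ n)) = ζ n) (hτ : IsGeodesicOn τ 0 (dist x (ζ m))) (hτ0 : τ 0 = x)
    (hτm : τ (dist x (ζ m)) = ζ m) {t : ℝ} (ht : 0 ≤ t) (htn : t + dist x (ζ 0) < n) :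
    dist (σ t) (τ t) ≤ 2 * dist x (ζ 0) * t / (n - dist x (ζ 0)) := by
  set D := dist x (ζ 0)
  have hD : 0 ≤ D := dist_nonneg
  have hm : 0 < m := by linarith
  have hLn : n - D ≤ dist x (ζ n) := by
    linarith [abs_le.1 (hζ.abs_dist_sub_le x (t := n) (by linarith))]
  have hLm : m - D ≤ dist x (ζ m) := by linarith [abs_le.1 (hζ.abs_dist_sub_le x hm.le)]
  set s := n / m
  have hs : s ∈ Icc (0 : ℝ) 1 := ⟨div_nonneg (by linarith) hm.le, div_le_one_of_le₀ hnm hm.le⟩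
  have hsm : s * m = n := div_mul_cancel₀ n hm.ne'
  have hnear := hX.dist_geodesic_ray_proportional_le hζ dist_nonneg hm.le hτ hτm hs
  rw [hsm, hτ0, dist_comm] at hnear
  have hℓ : n - D ≤ s * dist x (ζ m) := by
    linarith [mul_le_mul_of_nonneg_left hLm hs.1, mul_le_of_le_one_left hD hs.2]
  have hfellow := hX.dist_geodesics_le_of_same_start (by linarith) (by linarith) hσ
    (hτ.mono le_rfl (mul_le_of_le_one_left dist_nonneg hs.2)) (hσ0.trans hτ0.symm)
    (hσn ▸ hnear) ht (by linarith) (by linarith)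
  exact hfellow.trans (div_le_div_of_nonneg_left (by positivity) (by linarith) hLn)

theorem cauchySeq_geodesics_to_ray (hX : CAT0 X) (hζ : GeodesicRay ζ) {σ : ℕ → ℝ → X}
    (hσ : ∀ n : ℕ, IsGeodesicOn (σ n) 0 (dist x (ζ n))) (hσ0 : ∀ n, σ n 0 = x)
    (hσe : ∀ n : ℕ, σ n (dist x (ζ n)) = ζ n) {t : ℝ} (ht : 0 ≤ t) :
    CauchySeq fun n => σ n t := by
  set D := dist x (ζ 0) with hD
  refine Metric.cauchySeq_iff'.2 fun ε hε => ?_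
  obtain ⟨N, hN⟩ := exists_nat_gt (t + D + 2 * D * t / ε)
  have hq : 0 ≤ 2 * D * t / ε := by positivity
  have hND : 2 * D * t / ε < N - D := by linarith
  refine ⟨N, fun n hn => ?_⟩
  rw [dist_comm]
  calc dist (σ N t) (σ n t) ≤ 2 * D * t / (N - D) :=
        hX.dist_geodesics_to_ray_le hζ (Nat.cast_le.2 hn) (hσ N) (hσ0 N) (hσe N) (hσ n)
          (hσ0 n) (hσe n) ht (by linarith [hD])
    _ < ε := by
        rw [div_lt_iff₀ hε] at hND
        rw [div_lt_iff₀ (by linarith)]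
        linarith

theorem exists_ray_from [CompleteSpace X] (hX : CAT0 X) (x : X) (α : Boundary X) :
    ∃ ξ : Ray X, ξ.1 0 = x ∧ Quotient.mk (raySetoid X) ξ = α := by
  obtain ⟨⟨ζ, hζ⟩, rfl⟩ := Quotient.exists_rep α
  have : Nonempty X := ⟨x⟩
  choose σ hσ0 hσe hσ using fun n : ℕ => hX.1 x (ζ n)
  have hlim : ∀ t, 0 ≤ t → Tendsto (fun n => σ n t) atTop (𝓝 (limUnder atTop fun n => σ n t)) :=
    fun t ht => (hX.cauchySeq_geodesics_to_ray hζ hσ hσ0 hσe ht).tendsto_limUnder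
  have hfar : ∀ c : ℝ, ∀ᶠ n : ℕ in atTop, c ≤ n ∧ c ≤ dist x (ζ n) := fun c =>
    (tendsto_natCast_atTop_atTop.eventually_ge_atTop (c + dist x (ζ 0))).mono fun n hn =>
      ⟨by linarith [dist_nonneg (x := x) (y := ζ 0)],
        by linarith [abs_le.1 (hζ.abs_dist_sub_le x n.cast_nonneg)]⟩
  refine ⟨⟨_, GeodesicRay.of_tendsto hlim fun s t hs ht => ?_⟩, ?_,
    Quotient.sound ⟨2 * dist x (ζ 0), fun t ht => ?_⟩⟩
  · filter_upwards [hfar s, hfar t] with n hns hnt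
    exact hσ n s ⟨hs, hns.2⟩ t ⟨ht, hnt.2⟩
  · exact tendsto_nhds_unique (hlim 0 le_rfl) (by simp [hσ0])
  · refine le_of_tendsto ((hlim t ht).dist tendsto_const_nhds) ?_
    filter_upwards [hfar t, hfar 1] with n hnt hn1
    exact hX.dist_geodesic_to_ray_le hζ (by linarith) (hσ n) (hσ0 n) (hσe n) ht hnt.1 hnt.2

end RayFrom

end CAT0

section GroupAction

variable {G : Type*} [Group G]

theorem mul_inv_mem_Zg_of_conj_eq {g a b : G} (h : a⁻¹ * g * a = b⁻¹ * g * b) :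
    a * b⁻¹ ∈ Zg g := by
  show g * (a * b⁻¹) = a * b⁻¹ * g
  calc g * (a * b⁻¹) = a * (a⁻¹ * g * a) * b⁻¹ := by group
    _ = a * b⁻¹ * g := by rw [h]; group

variable [MulAction G X] [IsIsometricSMul G X]

theorem dist_conj_smul (g w : G) (x : X) :
    dist x ((w⁻¹ * g * w) • x) = dist (w • x) (g • w • x) := by
  rw [← dist_smul w, ← mul_smul, show w * (w⁻¹ * g * w) = g * w by group, mul_smul]

theorem exists_centralizer_orbit_near_of_dist_smul_le (hproper : ProperAction G X)
    (hcocompact : CocompactAction G X) (g : G) (x₀ : X) (M : ℝ) :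
    ∃ B, ∀ p : X, dist p (g • p) ≤ M → ∃ v ∈ Zg g, dist (v • x₀) p ≤ B := by
  obtain ⟨N, -, hN⟩ := hcocompact x₀
  -- `rep c` conjugates `g` to `c`; by properness only finitely many `c` matter, which bounds
  -- the correction by `rep c`.
  choose! rep hrep using fun (c : G) (hc : ∃ w : G, w⁻¹ * g * w = c) => hc
  obtain ⟨K, hK⟩ := ((hproper x₀ (N + M + N)).image fun c => dist ((rep c)⁻¹ • x₀) x₀).bddAbove
  refine ⟨K + N, fun p hp => ?_⟩
  obtain ⟨w, hw⟩ := hN p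
  have hconj : dist x₀ ((w⁻¹ * g * w) • x₀) ≤ N + M + N := by
    rw [dist_conj_smul]
    calc dist (w • x₀) (g • w • x₀)
        ≤ dist (w • x₀) p + dist p (g • p) + dist (g • p) (g • w • x₀) := dist_triangle4 _ _ _ _
      _ ≤ N + M + N := by
        rw [dist_smul, dist_comm p (w • x₀)]
        exact add_le_add (add_le_add hw hp) hw
  refine ⟨w * (rep _)⁻¹, mul_inv_mem_Zg_of_conj_eq (hrep _ ⟨w, rfl⟩).symm, ?_⟩
  calc dist ((w * (rep (w⁻¹ * g * w))⁻¹) • x₀) p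
      ≤ dist ((w * (rep (w⁻¹ * g * w))⁻¹) • x₀) (w • x₀) + dist (w • x₀) p := dist_triangle _ _ _
    _ ≤ K + N := by
      rw [mul_smul, dist_smul]
      exact add_le_add (hK (mem_image_of_mem _ hconj)) hw

namespace CAT0

theorem convergesTo_of_dist_le (hX : CAT0 X) {ξ : Ray X} {x₀ : X} (hξ0 : ξ.1 0 = x₀)
    {y : ℕ → X} {u : ℕ → ℝ} (hu : Tendsto u atTop atTop) {B : ℝ}
    (hB : ∀ i, dist (y i) (ξ.1 (u i)) ≤ B) : ConvergesTo x₀ y ξ := by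
  intro r hr ε hε
  have hB0 : 0 ≤ B := dist_nonneg.trans (hB 0)
  have hq : 0 ≤ 2 * B * r / ε := by positivity
  obtain ⟨n₀, hn₀⟩ := eventually_atTop.1 (hu.eventually_gt_atTop (r + B + 2 * B * r / ε))
  refine ⟨n₀, fun n hn => ?_⟩
  have hun := hn₀ n hn
  have hξu : dist x₀ (ξ.1 (u n)) = u n := by
    rw [← hξ0, (ξ.2.isGeodesicOn (u n)).dist_eq_sub (by linarith), sub_zero]
  have hfar : u n - B ≤ dist x₀ (y n) := by
    linarith [dist_triangle x₀ (y n) (ξ.1 (u n)), hB n]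
  refine ⟨by linarith, fun γ hγ hγ0 hγe => ?_⟩
  have hεu : 2 * B * r < ε * u n := by
    have := (div_lt_iff₀ hε).1 (show 2 * B * r / ε < u n by linarith)
    linarith
  calc dist (ξ.1 r) (γ r) ≤ 2 * B * r / u n :=
        hX.dist_geodesics_le_of_same_start (by linarith) dist_nonneg (ξ.2.isGeodesicOn _) hγ
          (hξ0.trans hγ0.symm) (by rw [hγe, dist_comm]; exact hB n) hr.le (by linarith)
          (by linarith)
    _ < ε := (div_lt_iff₀ (by linarith)).2 (by linarith)

theorem boundarySMul_eq_of_mem_limitSet (hX : CAT0 X) {g : G} {x₀ : X} {α : Boundary X}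
    (hα : α ∈ LimitSet (Zg g) x₀) : boundarySMul g α = α := by
  obtain ⟨ξ, hξ0, rfl, v, hvZ, hconv⟩ := hα
  refine Quotient.sound ⟨dist x₀ (g • x₀) + 2, fun t ht => ?_⟩
  show dist (g • ξ.1 t) (ξ.1 t) ≤ dist x₀ (g • x₀) + 2
  rcases ht.eq_or_lt with rfl | ht
  · rw [hξ0, dist_comm]
    linarith
  obtain ⟨n, hn⟩ := hconv t ht 1 one_pos
  obtain ⟨htd, hfellow⟩ := hn n le_rfl
  obtain ⟨γ, hγ0, hγe, hγ⟩ := hX.1 x₀ (v n • x₀)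
  have hξγ : dist (ξ.1 t) (γ t) < 1 := hfellow γ hγ hγ0 hγe
  have hend : dist (γ (dist x₀ (v n • x₀))) (g • γ (dist x₀ (v n • x₀))) ≤ dist x₀ (g • x₀) := by
    rw [hγe, smul_smul, (hvZ n : g * v n = v n * g), mul_smul, dist_smul]
  have hmove : dist (γ t) (g • γ t) ≤ dist x₀ (g • x₀) :=
    hX.dist_geodesics_le_of_endpoints (ht.trans htd) hγ (hγ.smul g) (by rw [hγ0]) hend
      ⟨ht.le, htd.le⟩
  calc dist (g • ξ.1 t) (ξ.1 t)
      ≤ dist (g • ξ.1 t) (g • γ t) + dist (g • γ t) (γ t) + dist (γ t) (ξ.1 t) :=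
        dist_triangle4 _ _ _ _
    _ ≤ dist x₀ (g • x₀) + 2 := by
      rw [dist_smul, dist_comm (g • γ t), dist_comm (γ t) (ξ.1 t)]
      linarith

theorem mem_limitSet_of_boundarySMul_eq [CompleteSpace X] (hX : CAT0 X)
    (hproper : ProperAction G X) (hcocompact : CocompactAction G X) {g : G} (x₀ : X)
    {α : Boundary X} (hα : boundarySMul g α = α) : α ∈ LimitSet (Zg g) x₀ := by
  obtain ⟨ξ, hξ0, rfl⟩ := hX.exists_ray_from x₀ α
  obtain ⟨M, hM⟩ : Asymptotic (smulRay g ξ).1 ξ.1 := Quotient.exact hα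
  obtain ⟨B, hB⟩ := exists_centralizer_orbit_near_of_dist_smul_le hproper hcocompact g x₀ M
  choose v hvZ hvB using fun k : ℕ => hB (ξ.1 k) (by rw [dist_comm]; exact hM k k.cast_nonneg)
  exact ⟨ξ, hξ0, rfl, v, hvZ, hX.convergesTo_of_dist_le hξ0 tendsto_natCast_atTop_atTop hvB⟩

end CAT0

end GroupAction

end

/-- **Theorem 1.** For a geometric action of `G` on a proper CAT(0) space
`X` and `g ∈ G`, the fixed-point set of `g` in `∂X` is the limit set of the
centralizer of `g`. -/
theorem fixedSet_eq_limitSet_centralizer {G X : Type*} [Group G] [MetricSpace X]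
    [ProperSpace X] [MulAction G X] [IsIsometricSMul G X]
    (hX : CAT0 X) (hproper : ProperAction G X) (hcocompact : CocompactAction G X)
    (g : G) (x₀ : X) :
    {α : Boundary X | boundarySMul g α = α} = LimitSet (Zg g) x₀ := by
  ext α
  exact ⟨hX.mem_limitSet_of_boundarySMul_eq hproper hcocompact x₀,
    hX.boundarySMul_eq_of_mem_limitSet⟩
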